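/- For μ > 0, ν real, and β > 0: ∫_0^∞ x^{ν-1} exp(-β/x − μx) dx = 2 (β/μ)^{ν/2} K_ν(2√(βμ)), where K_ν is the modified Bessel function of the second kind. -/

import Mathlib

/-!
The substitution `x = c eᵗ` with `c = √(β/μ)` turns `β/x + μx` into `2√(βμ) cosh t` and
`x^(ν-1) dx` into `c^ν e^(νt) dt`, so the integral becomes `(β/μ)^(ν/2)` times
`∫_ℝ e^(νt) e^(-2√(βμ) cosh t) dt`. Folding this two-sided integral onto `(0, ∞)` replaces `e^(νt)`
by `e^(νt) + e^(-νt) = 2 cosh (νt)`, which gives `2 K_ν(2√(βμ))`. The Gaussian bound `cosh t ≥ t²/4`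
makes the integrals converge.
-/

open MeasureTheory Real Set

/-- The modified Bessel function of the second kind,
`K_ν(z) = ∫_0^∞ exp (-z cosh t) cosh (ν t) dt`. -/
noncomputable def besselK (ν z : ℝ) : ℝ :=
  ∫ t in Set.Ioi (0 : ℝ), Real.exp (-z * Real.cosh t) * Real.cosh (ν * t)

lemma sq_div_four_le_cosh (t : ℝ) : t ^ 2 / 4 ≤ cosh t := by
  have h := quadratic_le_exp_of_nonneg (abs_nonneg t)
  rw [sq_abs] at h
  rw [← cosh_abs, cosh_eq]
  linarith [exp_pos (-|t|), abs_nonneg t]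

lemma integrable_exp_mul_sub_mul_sq {b : ℝ} (hb : 0 < b) (c : ℝ) :
    Integrable fun t : ℝ => exp (c * t - b * t ^ 2) := by
  have hsq (t : ℝ) : c * t - b * t ^ 2 = c ^ 2 / (4 * b) + -b * (t - c / (2 * b)) ^ 2 := by
    field_simp; ring
  simp_rw [hsq, exp_add]
  exact ((integrable_exp_neg_mul_sq hb).comp_sub_right _).const_mul _

lemma integrable_exp_mul_mul_exp_neg_mul_cosh {a : ℝ} (ha : 0 < a) (ν : ℝ) :
    Integrable fun t : ℝ => exp (ν * t) * exp (-a * cosh t) := by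
  refine (integrable_exp_mul_sub_mul_sq (b := a / 4) (by positivity) ν).mono' (by fun_prop) ?_
  refine .of_forall fun t => ?_
  rw [norm_of_nonneg (by positivity), ← exp_add]
  have := sq_div_four_le_cosh t
  gcongr
  nlinarith

lemma integral_eq_integral_Ioi_add_comp_neg {E : Type*} [NormedAddCommGroup E]
    [NormedSpace ℝ E] {f : ℝ → E} (hf : Integrable f) :
    ∫ t, f t = ∫ t in Ioi 0, (f t + f (-t)) := by
  rw [integral_add hf.integrableOn hf.comp_neg.integrableOn, integral_comp_neg_Ioi, neg_zero,
    add_comm, intervalIntegral.integral_Iic_add_Ioi hf.integrableOn hf.integrableOn]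

lemma integral_exp_mul_mul_exp_neg_mul_cosh {a : ℝ} (ha : 0 < a) (ν : ℝ) :
    ∫ t, exp (ν * t) * exp (-a * cosh t) = 2 * besselK ν a := by
  have heven (t : ℝ) : exp (ν * t) * exp (-a * cosh t) + exp (ν * -t) * exp (-a * cosh (-t)) =
      2 * (exp (-a * cosh t) * cosh (ν * t)) := by
    rw [cosh_neg, cosh_eq (ν * t), mul_neg]
    ring
  rw [integral_eq_integral_Ioi_add_comp_neg (integrable_exp_mul_mul_exp_neg_mul_cosh ha ν)]
  simp_rw [heven]
  rw [integral_const_mul, besselK]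

lemma integral_Ioi_zero_eq_integral_exp_smul {E : Type*} [NormedAddCommGroup E] [NormedSpace ℝ E]
    (g : ℝ → E) : ∫ x in Ioi 0, g x = ∫ t, exp t • g (exp t) := by
  rw [← range_exp, ← image_univ, integral_image_eq_integral_abs_deriv_smul MeasurableSet.univ
    (fun t _ => (hasDerivAt_exp t).hasDerivWithinAt) exp_injective.injOn, setIntegral_univ]
  simp_rw [abs_of_pos (exp_pos _)]

lemma integral_Ioi_zero_eq_integral_mul_exp_smul {E : Type*} [NormedAddCommGroup E]
    [NormedSpace ℝ E] (g : ℝ → E) {c : ℝ} (hc : 0 < c) :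
    ∫ x in Ioi 0, g x = ∫ t, (c * exp t) • g (c * exp t) := by
  rw [integral_Ioi_zero_eq_integral_exp_smul, ← integral_add_right_eq_self _ (log c)]
  simp_rw [exp_add, exp_log hc, mul_comm (exp _) c]

lemma mul_exp_smul_rpow_mul_exp_eq {μ β c : ℝ} (hc : 0 < c) (hβ : μ * c ^ 2 = β) (ν t : ℝ) :
    (c * exp t) • ((c * exp t) ^ (ν - 1) * exp (-β / (c * exp t) - μ * (c * exp t))) =
      c ^ ν * (exp (ν * t) * exp (-(2 * (μ * c)) * cosh t)) := by
  have hx : 0 < c * exp t := by positivity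
  rw [smul_eq_mul, ← mul_assoc, rpow_sub_one hx.ne', mul_div_cancel₀ _ hx.ne',
    mul_rpow hc.le (exp_pos t).le, ← exp_mul, mul_comm t, mul_assoc, cosh_eq, exp_neg, ← hβ]
  congr 3
  field_simp
  ring

/-- Gradshteyn–Ryzhik 3.471.9: for `μ > 0`, `β > 0` and real `ν`,
`∫_0^∞ x^{ν-1} exp (-β/x - μ x) dx = 2 (β/μ)^{ν/2} K_ν(2 √(βμ))`. -/
theorem integral_rpow_exp_inv_mul (μ ν β : ℝ) (hμ : 0 < μ) (hβ : 0 < β) :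
    ∫ x in Set.Ioi (0 : ℝ), x ^ (ν - 1) * Real.exp (-β / x - μ * x) =
      2 * (β / μ) ^ (ν / 2) * besselK ν (2 * Real.sqrt (β * μ)) := by
  set c := √(β / μ) with hc_def
  have hc : 0 < c := sqrt_pos.2 (div_pos hβ hμ)
  have hβc : μ * c ^ 2 = β := by rw [sq_sqrt (div_pos hβ hμ).le]; field_simp
  have hμc : μ * c = √(β * μ) := by
    rw [← hβc, show μ * c ^ 2 * μ = (μ * c) ^ 2 by ring, sqrt_sq (by positivity)]
  have hcν : c ^ ν = (β / μ) ^ (ν / 2) := by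
    rw [hc_def, sqrt_eq_rpow, ← rpow_mul (div_pos hβ hμ).le]
    ring_nf
  rw [integral_Ioi_zero_eq_integral_mul_exp_smul _ hc]
  simp_rw [mul_exp_smul_rpow_mul_exp_eq hc hβc]
  rw [integral_const_mul, integral_exp_mul_mul_exp_neg_mul_cosh (by positivity), hμc, hcν]
  ring
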